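/- Let B ⊂ [0,1]. There exists a continuous transition function p : [0,1] → [0,1] (i.e. p(ξ/2) + p(ξ/2 + 1/2) = 1 for every ξ ∈ [0,1]) with p(ξ) = 0 for every ξ ∈ B_e^c (so B is invariant for p) if and only if closure(B_e^c) ∩ closure(B_b) = ∅. -/
import Mathlib


open Set MeasureTheory Filter

open Classical in
/-- The doubling map `θ` on `[0,1)`: `θ(ξ) = 2ξ` for `ξ < 1/2`, `2ξ − 1` otherwise. -/
noncomputable def theta (ξ : ℝ) : ℝ := if ξ < 1/2 then 2*ξ else 2*ξ - 1

open Classical in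
/-- `ξ* = ξ + 1/2` for `ξ ∈ [0,1/2]` and `ξ − 1/2` for `ξ ∈ (1/2,1]`. -/
noncomputable def starR (ξ : ℝ) : ℝ := if ξ ≤ 1/2 then ξ + 1/2 else ξ - 1/2


/-- The exit set `B_e^c = {ξ/2 + j/2 : ξ ∈ B, j ∈ {0,1}} ∩ ([0,1] \ B)`. -/
def BeI (B : Set ℝ) : Set ℝ :=
  {y | ∃ ξ ∈ B, y = ξ/2 ∨ y = ξ/2 + 1/2} ∩ (Set.Icc (0:ℝ) 1 \ B)

/-- The barrier set `B_b = (B_e^c)*`. -/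
noncomputable def BbI (B : Set ℝ) : Set ℝ := starR '' BeI B

lemma BeI_subset_Icc (B : Set ℝ) : BeI B ⊆ Set.Icc (0:ℝ) 1 := fun _ hx => hx.2.1

lemma starR_mem_Icc {ξ : ℝ} (hξ : ξ ∈ Set.Icc (0:ℝ) 1) : starR ξ ∈ Set.Icc (0:ℝ) 1 := by
  obtain ⟨h0, h1⟩ := hξ
  unfold starR
  split_ifs with h <;> constructor <;> [skip; skip; skip; skip] <;> linarith

lemma BbI_subset_Icc (B : Set ℝ) : BbI B ⊆ Set.Icc (0:ℝ) 1 := by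
  rintro z ⟨ξ, hξ, rfl⟩
  exact starR_mem_Icc hξ.2.1

/-- If `1 ∈ closure (BbI B)` then `1/2 ∈ closure (BeI B)`. -/
lemma half_mem_of_one_mem_closure_BbI {B : Set ℝ} (h : (1:ℝ) ∈ closure (BbI B)) :
    (1/2 : ℝ) ∈ closure (BeI B) := by
  rw [Metric.mem_closure_iff] at h ⊢
  intro ε hε
  obtain ⟨z, hz, hd⟩ := h (min ε (1/4)) (by positivity)
  obtain ⟨ξ, hξ, rfl⟩ := hz
  obtain ⟨hξ0, hξ1⟩ := BeI_subset_Icc B hξ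
  have hmin : min ε (1/4) ≤ 1/4 := min_le_right _ _
  have hminε : min ε (1/4) ≤ ε := min_le_left _ _
  rw [Real.dist_eq, abs_lt] at hd
  refine ⟨ξ, hξ, ?_⟩
  rw [Real.dist_eq, abs_lt]
  by_cases hle : ξ ≤ 1/2
  · simp only [starR, if_pos hle] at hd
    constructor <;> linarith
  · simp only [starR, if_neg hle] at hd
    exfalso; linarith

/-- If `0 ∈ closure (BeI B)` then `1/2 ∈ closure (BbI B)`. -/
lemma half_mem_of_zero_mem_closure_BeI {B : Set ℝ} (h : (0:ℝ) ∈ closure (BeI B)) :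
    (1/2 : ℝ) ∈ closure (BbI B) := by
  rw [Metric.mem_closure_iff] at h ⊢
  intro ε hε
  obtain ⟨ξ, hξ, hd⟩ := h (min ε (1/4)) (by positivity)
  obtain ⟨hξ0, hξ1⟩ := BeI_subset_Icc B hξ
  have hmin : min ε (1/4) ≤ 1/4 := min_le_right _ _
  have hminε : min ε (1/4) ≤ ε := min_le_left _ _
  rw [Real.dist_eq, abs_lt] at hd
  have hle : ξ ≤ 1/2 := by linarith
  refine ⟨starR ξ, ⟨ξ, hξ, rfl⟩, ?_⟩
  rw [Real.dist_eq, abs_lt]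
  simp only [starR, if_pos hle]
  constructor <;> linarith

/-- If `1 ∈ closure (BeI B)` then `1/2 ∈ closure (BbI B)`. -/
lemma half_mem_of_one_mem_closure_BeI {B : Set ℝ} (h : (1:ℝ) ∈ closure (BeI B)) :
    (1/2 : ℝ) ∈ closure (BbI B) := by
  rw [Metric.mem_closure_iff] at h ⊢
  intro ε hε
  obtain ⟨ξ, hξ, hd⟩ := h (min ε (1/4)) (by positivity)
  obtain ⟨hξ0, hξ1⟩ := BeI_subset_Icc B hξ
  have hmin : min ε (1/4) ≤ 1/4 := min_le_right _ _
  have hminε : min ε (1/4) ≤ ε := min_le_left _ _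
  rw [Real.dist_eq, abs_lt] at hd
  have hle : ¬ ξ ≤ 1/2 := by intro hc; linarith
  refine ⟨starR ξ, ⟨ξ, hξ, rfl⟩, ?_⟩
  rw [Real.dist_eq, abs_lt]
  simp only [starR, if_neg hle]
  constructor <;> linarith

/-- If `0 ∈ closure (BbI B)` then `1/2 ∈ closure (BeI B)`. -/
lemma half_mem_of_zero_mem_closure_BbI {B : Set ℝ} (h : (0:ℝ) ∈ closure (BbI B)) :
    (1/2 : ℝ) ∈ closure (BeI B) := by
  rw [Metric.mem_closure_iff] at h ⊢
  intro ε hε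
  obtain ⟨z, hz, hd⟩ := h (min ε (1/4)) (by positivity)
  obtain ⟨ξ, hξ, rfl⟩ := hz
  obtain ⟨hξ0, hξ1⟩ := BeI_subset_Icc B hξ
  have hmin : min ε (1/4) ≤ 1/4 := min_le_right _ _
  have hminε : min ε (1/4) ≤ ε := min_le_left _ _
  rw [Real.dist_eq, abs_lt] at hd
  refine ⟨ξ, hξ, ?_⟩
  rw [Real.dist_eq, abs_lt]
  by_cases hle : ξ ≤ 1/2
  · simp only [starR, if_pos hle] at hd
    exfalso; linarith
  · simp only [starR, if_neg hle] at hd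
    constructor <;> linarith

/-- Construction of the transition function from a Urysohn-type function. -/
lemma construct_transition (B : Set ℝ) (f : ℝ → ℝ) (hf : Continuous f) (h01 : f 0 = f 1)
    (hrange : ∀ x, f x ∈ Set.Icc (0:ℝ) 1) (h0 : ∀ ξ ∈ BeI B, f ξ = 0)
    (h1 : ∀ ξ ∈ BbI B, f ξ = 1) :
    ∃ p : ℝ → ℝ, ContinuousOn p (Set.Icc 0 1) ∧
        (∀ ξ ∈ Set.Icc (0:ℝ) 1, p ξ ∈ Set.Icc (0:ℝ) 1) ∧
        (∀ ξ ∈ Set.Icc (0:ℝ) 1, p (ξ/2) + p (ξ/2 + 1/2) = 1) ∧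
        (∀ ξ ∈ BeI B, p ξ = 0) := by
  classical
  refine ⟨fun x => (f x + 1 - f (starR x)) / 2, ?_, ?_, ?_, ?_⟩
  · -- continuity
    have hst : ContinuousOn (fun x : ℝ => f (starR x)) (Set.Icc 0 1) := by
      have heq : ∀ x ∈ Set.Icc (0:ℝ) 1,
          f (starR x) = if x ≤ 1/2 then f (x + 1/2) else f (x - 1/2) := by
        intro x _
        by_cases h : x ≤ 1/2
        · simp only [starR]; rw [if_pos h, if_pos h]
        · simp only [starR]; rw [if_neg h, if_neg h]
      refine ContinuousOn.congr ?_ heq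
      apply ContinuousOn.if
      · intro a ha
        have hfr : frontier {a : ℝ | a ≤ 1/2} = {(1/2 : ℝ)} := by
          have : {a : ℝ | a ≤ 1/2} = Set.Iic (1/2 : ℝ) := rfl
          rw [this, frontier_Iic]
        rw [hfr] at ha
        have : a = 1/2 := ha.2
        subst this
        norm_num
        exact h01.symm
      · exact ((hf.comp (continuous_id.add continuous_const)).continuousOn).mono
          (Set.inter_subset_left)
      · exact ((hf.comp (continuous_id.sub continuous_const)).continuousOn).mono
          (Set.inter_subset_left)
    exact ((hf.continuousOn.add continuousOn_const).sub hst).div_const 2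
  · -- range
    intro ξ _
    obtain ⟨ha, hb⟩ := hrange ξ
    obtain ⟨hc, hd⟩ := hrange (starR ξ)
    constructor <;> [skip; skip] <;> simp only [] <;> linarith
  · -- transition identity
    intro ξ hξ
    obtain ⟨hξ0, hξ1⟩ := hξ
    have hx0 : (0:ℝ) ≤ ξ/2 := by linarith
    have hx1 : ξ/2 ≤ 1/2 := by linarith
    have hsx : starR (ξ/2) = ξ/2 + 1/2 := by simp only [starR]; rw [if_pos hx1]
    have key : f (starR (ξ/2 + 1/2)) = f (ξ/2) := by
      by_cases hc : ξ/2 + 1/2 ≤ 1/2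
      · have hz : ξ/2 = 0 := le_antisymm (by linarith) hx0
        rw [hz]
        simp only [starR]
        norm_num
        exact h01.symm
      · simp only [starR, if_neg hc]
        ring_nf
    simp only []
    rw [hsx, key]
    ring
  · -- vanishing on BeI
    intro ξ hξ
    have hA : f ξ = 0 := h0 ξ hξ
    have hBb : f (starR ξ) = 1 := h1 (starR ξ) ⟨ξ, hξ, rfl⟩
    simp only [hA, hBb]
    norm_num


/-- **Proposition.** For `B ⊂ [0,1]`, there is a continuous transition function
`p : [0,1] → [0,1]` (continuous on `[0,1]`, QMF condition) vanishing on `B_e^c`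
iff `closure(B_e^c) ∩ closure(B_b) = ∅`. -/
theorem exists_continuous_transitionFunction_iff (B : Set ℝ) (hB : B ⊆ Set.Icc 0 1) :
    (∃ p : ℝ → ℝ, ContinuousOn p (Set.Icc 0 1) ∧
        (∀ ξ ∈ Set.Icc (0:ℝ) 1, p ξ ∈ Set.Icc (0:ℝ) 1) ∧
        (∀ ξ ∈ Set.Icc (0:ℝ) 1, p (ξ/2) + p (ξ/2 + 1/2) = 1) ∧
        (∀ ξ ∈ BeI B, p ξ = 0)) ↔
      closure (BeI B) ∩ closure (BbI B) = ∅ := by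
  constructor
  · rintro ⟨p, hc, hrange, htrans, hzero⟩
    rw [Set.eq_empty_iff_forall_notMem]
    rintro x ⟨hx0, hx1⟩
    -- p = 0 on closure BeI
    have hS0 : IsClosed (Set.Icc (0:ℝ) 1 ∩ p ⁻¹' {0}) :=
      hc.preimage_isClosed_of_isClosed isClosed_Icc isClosed_singleton
    have hsub0 : BeI B ⊆ Set.Icc (0:ℝ) 1 ∩ p ⁻¹' {0} :=
      fun ξ hξ => ⟨hξ.2.1, hzero ξ hξ⟩
    have hp0 : p x = 0 := ((closure_minimal hsub0 hS0) hx0).2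
    -- p = 1 on BbI
    have hone : ∀ ξ ∈ BeI B, p (starR ξ) = 1 := by
      intro ξ hξ
      obtain ⟨hξ0, hξ1⟩ := BeI_subset_Icc B hξ
      have hz : p ξ = 0 := hzero ξ hξ
      by_cases hle : ξ ≤ 1/2
      · have ht := htrans (2*ξ) ⟨by linarith, by linarith⟩
        have e1 : 2*ξ/2 = ξ := by ring
        rw [e1] at ht
        simp only [starR, if_pos hle]
        linarith
      · have ht := htrans (2*ξ - 1) ⟨by linarith, by linarith⟩
        have e1 : (2*ξ - 1)/2 = ξ - 1/2 := by ring
        have e2 : ξ - 1/2 + 1/2 = ξ := by ring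
        rw [e1, e2] at ht
        simp only [starR, if_neg hle]
        linarith
    have hS1 : IsClosed (Set.Icc (0:ℝ) 1 ∩ p ⁻¹' {1}) :=
      hc.preimage_isClosed_of_isClosed isClosed_Icc isClosed_singleton
    have hsub1 : BbI B ⊆ Set.Icc (0:ℝ) 1 ∩ p ⁻¹' {1} := by
      rintro z ⟨ξ, hξ, rfl⟩
      exact ⟨starR_mem_Icc (BeI_subset_Icc B hξ), hone ξ hξ⟩
    have hp1 : p x = 1 := ((closure_minimal hsub1 hS1) hx1).2
    rw [hp0] at hp1
    norm_num at hp1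
  · intro h
    have hdisj : Disjoint (closure (BeI B)) (closure (BbI B)) :=
      Set.disjoint_iff_inter_eq_empty.mpr h
    by_cases h01 : (0:ℝ) ∈ closure (BbI B) ∨ (1:ℝ) ∈ closure (BbI B)
    · -- add {0,1} to the barrier side
      have hdisj' : Disjoint (closure (BeI B)) (closure (BbI B) ∪ {0, 1}) := by
        refine Disjoint.union_right hdisj ?_
        rw [Set.disjoint_iff_forall_ne]
        rintro a ha b hb rfl
        have hhalf1 : (1/2 : ℝ) ∈ closure (BeI B) := by
          rcases h01 with h0 | h1
          · exact half_mem_of_zero_mem_closure_BbI h0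
          · exact half_mem_of_one_mem_closure_BbI h1
        rcases hb with rfl | hb
        · -- a = 0 ∈ closure BeI
          have := half_mem_of_zero_mem_closure_BeI ha
          exact Set.disjoint_left.mp hdisj hhalf1 this
        · -- a = 1 ∈ closure BeI
          rw [Set.mem_singleton_iff] at hb; subst hb
          have := half_mem_of_one_mem_closure_BeI ha
          exact Set.disjoint_left.mp hdisj hhalf1 this
      obtain ⟨f, hf0, hf1, hfr⟩ := exists_continuous_zero_one_of_isClosed
        isClosed_closure ((isClosed_closure).union (by
          have : ({0, 1} : Set ℝ) = {0} ∪ {1} := rfl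
          rw [this]; exact (isClosed_singleton).union isClosed_singleton)) hdisj'
      refine construct_transition B f f.continuous ?_ hfr ?_ ?_
      · have e0 : f 0 = 1 := hf1 (Or.inr (Or.inl rfl))
        have e1 : f 1 = 1 := hf1 (Or.inr (Or.inr rfl))
        rw [e0, e1]
      · intro ξ hξ
        exact hf0 (subset_closure hξ)
      · intro ξ hξ
        exact hf1 (Or.inl (subset_closure hξ))
    · -- add {0,1} to the exit side
      push_neg at h01
      obtain ⟨hn0, hn1⟩ := h01
      have hdisj' : Disjoint (closure (BeI B) ∪ {0, 1}) (closure (BbI B)) := by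
        refine Disjoint.union_left hdisj ?_
        rw [Set.disjoint_iff_forall_ne]
        rintro a ha b hb rfl
        rcases ha with rfl | ha
        · exact hn0 hb
        · rw [Set.mem_singleton_iff] at ha; subst ha; exact hn1 hb
      obtain ⟨f, hf0, hf1, hfr⟩ := exists_continuous_zero_one_of_isClosed
        ((isClosed_closure).union (by
          have : ({0, 1} : Set ℝ) = {0} ∪ {1} := rfl
          rw [this]; exact (isClosed_singleton).union isClosed_singleton))
        isClosed_closure hdisj'
      refine construct_transition B f f.continuous ?_ hfr ?_ ?_
      · have e0 : f 0 = 0 := hf0 (Or.inr (Or.inl rfl))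
        have e1 : f 1 = 0 := hf0 (Or.inr (Or.inr rfl))
        rw [e0, e1]
      · intro ξ hξ
        exact hf0 (Or.inl (subset_closure hξ))
      · intro ξ hξ
        exact hf1 (subset_closure hξ)
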